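/- Dyadic level-set estimate: let ω be a doubling weight on ℝⁿ and B a ball. Then there is C depending only on the doubling constant such that for every x ∈ 2B, ∫_{2B} ω(B_{xu})^{−(n−1)/n} ω(u) du ≤ C ω(B)^{1/n}, where B_{xu} is the smallest ball containing x and u. -/

import Mathlib

/-!
Write `F t = ∫_{B(x,t)} ω` and `p = 1/n`. Two doublings around the midpoint of `x` and `u`
give `ω(B_{xu}) ≥ C_d⁻² F |u - x|`, so the integrand is at most
`C_d^{2(1-p)} F(|u - x|)^{p-1} ω(u)`. On the dyadic annulus `a_{k+1} ≤ |u - x| < a_k`,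
`a_k = R / 2^k`, this is at most `F(a_{k+1})^{p-1} ω(u)`, with integral
`F(a_{k+1})^{p-1} (F a_k - F a_{k+1})`; concavity of `t ↦ t^p` and `F a_k ≤ C_d F a_{k+1}` bound
that by `p⁻¹ C_d^{1-p} (F(a_k)^p - F(a_{k+1})^p)`. The sum over `k` telescopes to
`p⁻¹ C_d^{1-p} F(R)^p`; for `R = 4r` three more doublings compare `F(4r)` with `ω(B(x₀, r))`.
-/

open MeasureTheory Metric

/-- The smallest (closed) ball containing `x` and `u`. -/
noncomputable def segBall {n : ℕ} (x u : EuclideanSpace ℝ (Fin n)) :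
    Set (EuclideanSpace ℝ (Fin n)) :=
  closedBall (midpoint ℝ x u) (dist x u / 2)

namespace Real

theorem mul_rpow_sub_one_mul_sub_le_rpow_sub_rpow {p a b : ℝ} (hp0 : 0 ≤ p) (hp1 : p ≤ 1)
    (hb : 0 ≤ b) (ha : 0 < a) : p * a ^ (p - 1) * (a - b) ≤ a ^ p - b ^ p := by
  have hs : -1 ≤ b / a - 1 := by linarith [div_nonneg hb ha.le]
  have hbernoulli := rpow_one_add_le_one_add_mul_self hs hp0 hp1
  rw [add_sub_cancel, div_rpow hb ha.le, div_le_iff₀ (rpow_pos_of_pos ha p)] at hbernoulli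
  have hexpand : (1 + p * (b / a - 1)) * a ^ p = a ^ p - p * (a ^ p / a) * (a - b) := by
    field_simp
    ring
  rw [rpow_sub_one ha.ne']
  linarith

theorem rpow_le_rpow_mul_rpow_of_le_mul {q y z c : ℝ} (hq : q ≤ 0) (hy : 0 < y) (hc : 0 < c)
    (hyz : y ≤ c * z) : z ^ q ≤ c ^ (-q) * y ^ q := by
  calc z ^ q ≤ (y / c) ^ q :=
        rpow_le_rpow_of_nonpos (by positivity) (by rwa [div_le_iff₀' hc]) hq
    _ = c ^ (-q) * y ^ q := by rw [div_rpow hy.le hc.le, rpow_neg hc.le]; ring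

theorem rpow_sub_one_mul_sub_le {p a b C : ℝ} (hp0 : 0 < p) (hp1 : p ≤ 1) (hb : 0 < b)
    (hba : b ≤ a) (haC : a ≤ C * b) :
    b ^ (p - 1) * (a - b) ≤ p⁻¹ * C ^ (1 - p) * (a ^ p - b ^ p) := by
  have ha : 0 < a := hb.trans_le hba
  have hC : 0 < C := pos_of_mul_pos_left (ha.trans_le haC) hb.le
  have hcompare : b ^ (p - 1) ≤ C ^ (1 - p) * a ^ (p - 1) := by
    simpa using rpow_le_rpow_mul_rpow_of_le_mul (by linarith : p - 1 ≤ 0) ha hC haC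
  calc b ^ (p - 1) * (a - b) ≤ C ^ (1 - p) * a ^ (p - 1) * (a - b) :=
        mul_le_mul_of_nonneg_right hcompare (sub_nonneg.2 hba)
    _ = p⁻¹ * C ^ (1 - p) * (p * a ^ (p - 1) * (a - b)) := by field_simp
    _ ≤ p⁻¹ * C ^ (1 - p) * (a ^ p - b ^ p) := by
        gcongr
        exact mul_rpow_sub_one_mul_sub_le_rpow_sub_rpow hp0.le hp1 hb.le ha

end Real

theorem ENNReal.tsum_ofReal_sub_succ_le {b : ℕ → ℝ} (hb : Antitone b) (hb0 : ∀ k, 0 ≤ b k) :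
    ∑' k, ENNReal.ofReal (b k - b (k + 1)) ≤ ENNReal.ofReal (b 0) := by
  refine ENNReal.tsum_le_of_sum_range_le fun N => ?_
  rw [← ENNReal.ofReal_sum_of_nonneg fun k _ => sub_nonneg.2 (hb k.le_succ),
    Finset.sum_range_sub']
  exact ENNReal.ofReal_le_ofReal (sub_le_self _ (hb0 N))

theorem Metric.ball_sdiff_singleton_subset_iUnion_dyadic {X : Type*} [MetricSpace X] (x : X)
    (R : ℝ) :
    ball x R \ {x} ⊆ ⋃ k : ℕ, ball x (R / 2 ^ k) \ ball x (R / 2 ^ (k + 1)) := by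
  classical
  rintro u ⟨hu, hux : u ≠ x⟩
  rw [mem_ball] at hu
  have hd : 0 < dist u x := dist_pos.2 hux
  have hex : ∃ k : ℕ, R / 2 ^ (k + 1) ≤ dist u x := by
    obtain ⟨k, hk⟩ :=
      exists_pow_lt_of_lt_one (div_pos hd (hd.trans hu)) (by norm_num : (2 : ℝ)⁻¹ < 1)
    refine ⟨k, ?_⟩
    rw [inv_pow, inv_lt_iff_one_lt_mul₀ (by positivity), div_mul_eq_mul_div,
      one_lt_div (hd.trans hu)] at hk
    rw [div_le_iff₀ (by positivity), pow_succ]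
    nlinarith
  refine Set.mem_iUnion.2 ⟨Nat.find hex, ?_, not_lt.2 (Nat.find_spec hex)⟩
  rw [mem_ball]
  rcases h : Nat.find hex with _ | k
  · simpa using hu
  · exact not_le.1 (Nat.find_min hex (h ▸ k.lt_succ_self))

theorem setIntegral_mono_set_of_nonneg {X : Type*} [MeasurableSpace X] {μ : Measure X}
    {ω : X → ℝ} {s t : Set X} (hω : ∀ z, 0 ≤ ω z) (ht : IntegrableOn ω t μ) (hst : s ⊆ t) :
    ∫ z in s, ω z ∂μ ≤ ∫ z in t, ω z ∂μ :=
  setIntegral_mono_set ht (ae_of_all _ hω) hst.eventuallyLE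

section Weighted

variable {X : Type*} [PseudoMetricSpace X] [MeasurableSpace X] {μ : Measure X} {ω : X → ℝ}

theorem integral_ball_two_pow_mul_le {x : X} {C R : ℝ} (hC : 0 ≤ C) (hR : 0 < R)
    (hdoub : ∀ t, 0 < t → ∫ z in ball x (2 * t), ω z ∂μ ≤ C * ∫ z in ball x t, ω z ∂μ) (k : ℕ) :
    ∫ z in ball x (2 ^ k * R), ω z ∂μ ≤ C ^ k * ∫ z in ball x R, ω z ∂μ := by
  induction k with
  | zero => simp
  | succ k ih =>
    calc ∫ z in ball x (2 ^ (k + 1) * R), ω z ∂μ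
        = ∫ z in ball x (2 * (2 ^ k * R)), ω z ∂μ := by rw [pow_succ', mul_assoc]
      _ ≤ C * ∫ z in ball x (2 ^ k * R), ω z ∂μ := hdoub _ (by positivity)
      _ ≤ C ^ (k + 1) * ∫ z in ball x R, ω z ∂μ := by
        rw [pow_succ', mul_assoc]
        exact mul_le_mul_of_nonneg_left ih hC

theorem integral_ball_four_mul_le_cube_mul {x₀ x : X} {C r : ℝ} (hC : 0 ≤ C) (hr : 0 < r)
    (hx : x ∈ ball x₀ (2 * r)) (hω : ∀ z, 0 ≤ ω z) (hint : IntegrableOn ω (ball x₀ (2 ^ 3 * r)) μ)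
    (hdoub : ∀ t, 0 < t → ∫ z in ball x₀ (2 * t), ω z ∂μ ≤ C * ∫ z in ball x₀ t, ω z ∂μ) :
    ∫ z in ball x (4 * r), ω z ∂μ ≤ C ^ 3 * ∫ z in ball x₀ r, ω z ∂μ := by
  refine le_trans (setIntegral_mono_set_of_nonneg hω hint fun u hu => ?_)
    (integral_ball_two_pow_mul_le hC hr hdoub 3)
  rw [mem_ball] at hu hx ⊢
  linarith [dist_triangle u x x₀]

variable [OpensMeasurableSpace X]

theorem lintegral_annulus_rpow_integral_ball_mul_le {x : X} {s C p : ℝ} (hp0 : 0 < p)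
    (hp1 : p ≤ 1) (hω : ∀ z, 0 ≤ ω z) (hint : IntegrableOn ω (ball x (2 * s)) μ)
    (hpos : 0 < ∫ z in ball x s, ω z ∂μ)
    (hdoub : ∫ z in ball x (2 * s), ω z ∂μ ≤ C * ∫ z in ball x s, ω z ∂μ) :
    ∫⁻ u in ball x (2 * s) \ ball x s,
        ENNReal.ofReal ((∫ z in ball x (dist u x), ω z ∂μ) ^ (p - 1) * ω u) ∂μ ≤
      ENNReal.ofReal (p⁻¹ * C ^ (1 - p) *
        ((∫ z in ball x (2 * s), ω z ∂μ) ^ p - (∫ z in ball x s, ω z ∂μ) ^ p)) := by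
  set A := ball x (2 * s) \ ball x s
  set a := ∫ z in ball x (2 * s), ω z ∂μ
  set b := ∫ z in ball x s, ω z ∂μ
  have hs : s ≤ 2 * s := by
    by_contra! hs
    have hempty : ball x s = ∅ := ball_eq_empty.2 (by linarith)
    simp [b, hempty] at hpos
  have hba : b ≤ a := setIntegral_mono_set_of_nonneg hω hint (ball_subset_ball hs)
  have hpointwise : ∀ u ∈ A,
      ENNReal.ofReal ((∫ z in ball x (dist u x), ω z ∂μ) ^ (p - 1) * ω u) ≤
        ENNReal.ofReal (b ^ (p - 1)) * ENNReal.ofReal (ω u) := by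
    rintro u ⟨hu2s, hus⟩
    rw [← ENNReal.ofReal_mul (by positivity)]
    refine ENNReal.ofReal_le_ofReal (mul_le_mul_of_nonneg_right ?_ (hω u))
    refine Real.rpow_le_rpow_of_nonpos hpos ?_ (by linarith)
    exact setIntegral_mono_set_of_nonneg hω
      (hint.mono_set (ball_subset_ball (mem_ball.1 hu2s).le)) (ball_subset_ball (not_lt.1 hus))
  have hmass : ∫⁻ u in A, ENNReal.ofReal (ω u) ∂μ = ENNReal.ofReal (a - b) := by
    rw [← setIntegral_sdiff measurableSet_ball hint (ball_subset_ball hs),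
      ofReal_integral_eq_lintegral_ofReal (hint.mono_set Set.sdiff_subset) (ae_of_all _ hω)]
  calc ∫⁻ u in A, ENNReal.ofReal ((∫ z in ball x (dist u x), ω z ∂μ) ^ (p - 1) * ω u) ∂μ
      ≤ ∫⁻ u in A, ENNReal.ofReal (b ^ (p - 1)) * ENNReal.ofReal (ω u) ∂μ :=
        setLIntegral_mono' (measurableSet_ball.diff measurableSet_ball) hpointwise
    _ = ENNReal.ofReal (b ^ (p - 1) * (a - b)) := by
        rw [lintegral_const_mul' _ _ ENNReal.ofReal_ne_top, hmass,
          ENNReal.ofReal_mul (by positivity)]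
    _ ≤ ENNReal.ofReal (p⁻¹ * C ^ (1 - p) * (a ^ p - b ^ p)) :=
        ENNReal.ofReal_le_ofReal (Real.rpow_sub_one_mul_sub_le hp0 hp1 hpos hba hdoub)

end Weighted

theorem lintegral_ball_sdiff_singleton_rpow_integral_ball_mul_le {X : Type*} [MetricSpace X]
    [MeasurableSpace X] [OpensMeasurableSpace X] {μ : Measure X} {ω : X → ℝ} {x : X}
    {R C p : ℝ} (hp0 : 0 < p) (hp1 : p ≤ 1) (hR : 0 < R) (hω : ∀ z, 0 ≤ ω z)
    (hint : IntegrableOn ω (ball x R) μ) (hpos : ∀ t, 0 < t → 0 < ∫ z in ball x t, ω z ∂μ)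
    (hdoub : ∀ t, 0 < t → ∫ z in ball x (2 * t), ω z ∂μ ≤ C * ∫ z in ball x t, ω z ∂μ) :
    ∫⁻ u in ball x R \ {x},
        ENNReal.ofReal ((∫ z in ball x (dist u x), ω z ∂μ) ^ (p - 1) * ω u) ∂μ ≤
      ENNReal.ofReal (p⁻¹ * C ^ (1 - p) * (∫ z in ball x R, ω z ∂μ) ^ p) := by
  set a : ℕ → ℝ := fun k => R / 2 ^ k
  have ha_succ : ∀ k, 2 * a (k + 1) = a k := fun k => by simp only [a, pow_succ]; field_simp
  have ha_pos : ∀ k, 0 < a k := fun k => by positivity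
  have ha_le : ∀ k, a k ≤ R := fun k => div_le_self hR.le (one_le_pow₀ one_le_two)
  have hC : 0 < C := by
    have hhalf := hdoub (R / 2) (by positivity)
    rw [mul_div_cancel₀ R two_ne_zero] at hhalf
    have hR2 := hpos (R / 2) (by positivity)
    have hmono : ∫ z in ball x (R / 2), ω z ∂μ ≤ ∫ z in ball x R, ω z ∂μ :=
      setIntegral_mono_set_of_nonneg hω hint (ball_subset_ball (by linarith))
    exact pos_of_mul_pos_left (hR2.trans_le (hmono.trans hhalf)) hR2.le
  set b : ℕ → ℝ := fun k => p⁻¹ * C ^ (1 - p) * (∫ z in ball x (a k), ω z ∂μ) ^ p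
  have hF_nonneg : ∀ t, 0 ≤ ∫ z in ball x t, ω z ∂μ := fun t =>
    setIntegral_nonneg measurableSet_ball fun z _ => hω z
  have hb_nonneg : ∀ k, 0 ≤ b k := fun k =>
    mul_nonneg (by positivity) (Real.rpow_nonneg (hF_nonneg _) _)
  have hb_anti : Antitone b := antitone_nat_of_succ_le fun k => by
    have hF := setIntegral_mono_set_of_nonneg hω (hint.mono_set (ball_subset_ball (ha_le k)))
      (ball_subset_ball (by linarith [ha_succ k, ha_pos (k + 1)] : a (k + 1) ≤ a k))
    exact mul_le_mul_of_nonneg_left (Real.rpow_le_rpow (hF_nonneg _) hF hp0.le) (by positivity)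
  calc ∫⁻ u in ball x R \ {x},
        ENNReal.ofReal ((∫ z in ball x (dist u x), ω z ∂μ) ^ (p - 1) * ω u) ∂μ
      ≤ ∫⁻ u in ⋃ k, ball x (a k) \ ball x (a (k + 1)),
        ENNReal.ofReal ((∫ z in ball x (dist u x), ω z ∂μ) ^ (p - 1) * ω u) ∂μ :=
        lintegral_mono_set (ball_sdiff_singleton_subset_iUnion_dyadic x R)
    _ ≤ ∑' k, ∫⁻ u in ball x (a k) \ ball x (a (k + 1)),
        ENNReal.ofReal ((∫ z in ball x (dist u x), ω z ∂μ) ^ (p - 1) * ω u) ∂μ :=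
        lintegral_iUnion_le _ _
    _ ≤ ∑' k, ENNReal.ofReal (b k - b (k + 1)) := ENNReal.tsum_le_tsum fun k => by
        have hannulus := lintegral_annulus_rpow_integral_ball_mul_le hp0 hp1 hω
          (hint.mono_set (ball_subset_ball ((ha_succ k).trans_le (ha_le k))))
          (hpos _ (by positivity)) (hdoub _ (by positivity))
        rw [ha_succ k, mul_sub] at hannulus
        exact hannulus
    _ ≤ ENNReal.ofReal (b 0) := ENNReal.tsum_ofReal_sub_succ_le hb_anti hb_nonneg
    _ = ENNReal.ofReal (p⁻¹ * C ^ (1 - p) * (∫ z in ball x R, ω z ∂μ) ^ p) := by simp [b, a]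

/-- Lets the estimate be carried out with lower Lebesgue integrals, so the measurability of the
integrand never has to be checked. -/
theorem integral_le_of_lintegral_ofReal_le {α : Type*} [MeasurableSpace α] {μ : Measure α}
    {f : α → ℝ} {K : ℝ} (hf : ∀ a, 0 ≤ f a) (hK : 0 ≤ K)
    (h : ∫⁻ a, ENNReal.ofReal (f a) ∂μ ≤ ENNReal.ofReal K) : ∫ a, f a ∂μ ≤ K :=
  calc ∫ a, f a ∂μ ≤ ‖∫ a, f a ∂μ‖ := Real.le_norm_self _
    _ ≤ (∫⁻ a, ENNReal.ofReal ‖f a‖ ∂μ).toReal := norm_integral_le_lintegral_norm f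
    _ ≤ K :=
        ENNReal.toReal_le_of_le_ofReal hK (by simpa only [Real.norm_of_nonneg (hf _)] using h)

theorem MeasureTheory.LocallyIntegrable.integrableOn_ball {X : Type*} [PseudoMetricSpace X]
    [ProperSpace X] [MeasurableSpace X] {μ : Measure X} {f : X → ℝ} (hf : LocallyIntegrable f μ)
    (x : X) (r : ℝ) : IntegrableOn f (ball x r) μ :=
  (hf.integrableOn_isCompact (isCompact_closedBall x r)).mono_set ball_subset_closedBall

section Euclidean

variable {n : ℕ} {ω : EuclideanSpace ℝ (Fin n) → ℝ} {C : ℝ}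

theorem integral_ball_dist_le_sq_mul_integral_segBall (hC : 0 ≤ C) (hω : ∀ z, 0 ≤ ω z)
    (hloc : LocallyIntegrable ω volume)
    (hdoub : ∀ (p : EuclideanSpace ℝ (Fin n)) (R : ℝ), 0 < R →
      ∫ z in ball p (2 * R), ω z ≤ C * ∫ z in ball p R, ω z)
    {x u : EuclideanSpace ℝ (Fin n)} (hux : u ≠ x) :
    ∫ z in ball x (dist u x), ω z ≤ C ^ 2 * ∫ z in segBall x u, ω z := by
  set m := midpoint ℝ x u
  have hd : 0 < dist x u / 2 := by have := dist_pos.2 hux.symm; positivity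
  have hxm : dist x m = dist x u / 2 := by simp [m, dist_left_midpoint]; ring
  have hsub : ball x (dist u x) ⊆ ball m (2 ^ 2 * (dist x u / 2)) := fun z hz => by
    rw [mem_ball] at hz ⊢
    linarith [dist_triangle z x m, dist_comm u x]
  calc ∫ z in ball x (dist u x), ω z
      ≤ ∫ z in ball m (2 ^ 2 * (dist x u / 2)), ω z :=
        setIntegral_mono_set_of_nonneg hω (hloc.integrableOn_ball _ _) hsub
    _ ≤ C ^ 2 * ∫ z in ball m (dist x u / 2), ω z :=
        integral_ball_two_pow_mul_le hC hd (hdoub m) 2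
    _ ≤ C ^ 2 * ∫ z in segBall x u, ω z :=
        mul_le_mul_of_nonneg_left (setIntegral_mono_set_of_nonneg hω
          (hloc.integrableOn_isCompact (isCompact_closedBall _ _)) ball_subset_closedBall)
          (by positivity)

theorem lintegral_ball_rpow_integral_segBall_mul_le [NeZero n] {p R : ℝ} (hp0 : 0 < p)
    (hp1 : p ≤ 1) (hC : 0 < C) (hR : 0 < R) (hω : ∀ z, 0 < ω z)
    (hloc : LocallyIntegrable ω volume)
    (hdoub : ∀ (p : EuclideanSpace ℝ (Fin n)) (R : ℝ), 0 < R →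
      ∫ z in ball p (2 * R), ω z ≤ C * ∫ z in ball p R, ω z)
    (x : EuclideanSpace ℝ (Fin n)) :
    ∫⁻ u in ball x R, ENNReal.ofReal ((∫ z in segBall x u, ω z) ^ (p - 1) * ω u) ≤
      ENNReal.ofReal
        ((C ^ 2) ^ (1 - p) * (p⁻¹ * C ^ (1 - p) * (∫ z in ball x R, ω z) ^ p)) := by
  have hpos : ∀ t, 0 < t → 0 < ∫ z in ball x t, ω z := fun t ht => by
    rw [setIntegral_pos_iff_support_of_nonneg_ae (ae_of_all _ fun z => (hω z).le)
        (hloc.integrableOn_ball x t),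
      Function.support_eq_univ fun z => (hω z).ne', Set.univ_inter]
    exact measure_ball_pos volume x ht
  have hpointwise : ∀ u ∈ ball x R \ {x},
      ENNReal.ofReal ((∫ z in segBall x u, ω z) ^ (p - 1) * ω u) ≤
        ENNReal.ofReal ((C ^ 2) ^ (1 - p)) *
          ENNReal.ofReal ((∫ z in ball x (dist u x), ω z) ^ (p - 1) * ω u) := by
    rintro u ⟨-, hux : u ≠ x⟩
    rw [← ENNReal.ofReal_mul (by positivity), ← mul_assoc]
    refine ENNReal.ofReal_le_ofReal (mul_le_mul_of_nonneg_right ?_ (hω u).le)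
    simpa only [neg_sub] using
      Real.rpow_le_rpow_mul_rpow_of_le_mul (by linarith : p - 1 ≤ 0) (hpos _ (dist_pos.2 hux))
        (by positivity)
        (integral_ball_dist_le_sq_mul_integral_segBall hC.le (fun z => (hω z).le) hloc hdoub hux)
  calc ∫⁻ u in ball x R, ENNReal.ofReal ((∫ z in segBall x u, ω z) ^ (p - 1) * ω u)
      = ∫⁻ u in ball x R \ {x},
          ENNReal.ofReal ((∫ z in segBall x u, ω z) ^ (p - 1) * ω u) :=
        setLIntegral_congr (sdiff_null_ae_eq_self (measure_singleton x)).symm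
    _ ≤ ∫⁻ u in ball x R \ {x}, ENNReal.ofReal ((C ^ 2) ^ (1 - p)) *
          ENNReal.ofReal ((∫ z in ball x (dist u x), ω z) ^ (p - 1) * ω u) :=
        setLIntegral_mono' (measurableSet_ball.diff (measurableSet_singleton x)) hpointwise
    _ = ENNReal.ofReal ((C ^ 2) ^ (1 - p)) * ∫⁻ u in ball x R \ {x},
          ENNReal.ofReal ((∫ z in ball x (dist u x), ω z) ^ (p - 1) * ω u) :=
        lintegral_const_mul' _ _ ENNReal.ofReal_ne_top
    _ ≤ ENNReal.ofReal ((C ^ 2) ^ (1 - p)) *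
          ENNReal.ofReal (p⁻¹ * C ^ (1 - p) * (∫ z in ball x R, ω z) ^ p) := by
        gcongr
        exact lintegral_ball_sdiff_singleton_rpow_integral_ball_mul_le hp0 hp1 hR
          (fun z => (hω z).le) (hloc.integrableOn_ball x R) hpos (hdoub x)
    _ = _ := (ENNReal.ofReal_mul (by positivity)).symm

end Euclidean

theorem stmt_17 {n : ℕ} (hn : 0 < n) (C_d : ℝ) (hCd : 0 < C_d) :
    ∃ C > 0, ∀ ω : EuclideanSpace ℝ (Fin n) → ℝ,
      (∀ x, 0 < ω x) → LocallyIntegrable ω volume →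
      -- doubling with constant C_d
      (∀ (p : EuclideanSpace ℝ (Fin n)) (R : ℝ), 0 < R →
        ∫ x in ball p (2 * R), ω x ≤ C_d * ∫ x in ball p R, ω x) →
      ∀ (x₀ : EuclideanSpace ℝ (Fin n)) (r : ℝ), 0 < r →
      ∀ x ∈ ball x₀ (2 * r),
        (∫ u in ball x₀ (2 * r),
            (∫ z in segBall x u, ω z) ^ (-(((n : ℝ) - 1) / n)) * ω u) ≤
          C * (∫ u in ball x₀ r, ω u) ^ ((n : ℝ)⁻¹) := by
  have : NeZero n := ⟨hn.ne'⟩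
  set p : ℝ := (n : ℝ)⁻¹
  have hp0 : 0 < p := by positivity
  have hp1 : p ≤ 1 := inv_le_one_of_one_le₀ (by exact_mod_cast hn)
  have hexponent : -(((n : ℝ) - 1) / n) = p - 1 := by simp only [p]; field_simp; ring
  refine ⟨(C_d ^ 2) ^ (1 - p) * (p⁻¹ * C_d ^ (1 - p)) * (C_d ^ 3) ^ p, by positivity, ?_⟩
  intro ω hω hloc hdoub x₀ r hr x hx
  rw [hexponent]
  have hball : ball x₀ (2 * r) ⊆ ball x (4 * r) := fun u hu => by
    rw [mem_ball] at hu hx ⊢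
    linarith [dist_triangle u x₀ x, dist_comm x x₀]
  have hF_nonneg : ∀ (c : EuclideanSpace ℝ (Fin n)) t, 0 ≤ ∫ z in ball c t, ω z := fun c t =>
    setIntegral_nonneg measurableSet_ball fun z _ => (hω z).le
  calc ∫ u in ball x₀ (2 * r), (∫ z in segBall x u, ω z) ^ (p - 1) * ω u
      ≤ (C_d ^ 2) ^ (1 - p) * (p⁻¹ * C_d ^ (1 - p) * (∫ z in ball x (4 * r), ω z) ^ p) :=
        integral_le_of_lintegral_ofReal_le
          (fun u => mul_nonneg (Real.rpow_nonneg (setIntegral_nonneg measurableSet_closedBall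
            fun z _ => (hω z).le) _) (hω u).le)
          (by have := hF_nonneg x (4 * r); positivity)
          ((lintegral_mono_set hball).trans (lintegral_ball_rpow_integral_segBall_mul_le hp0 hp1
            hCd (by positivity) hω hloc hdoub x))
    _ ≤ (C_d ^ 2) ^ (1 - p) *
          (p⁻¹ * C_d ^ (1 - p) * (C_d ^ 3 * ∫ u in ball x₀ r, ω u) ^ p) := by
        gcongr
        · exact hF_nonneg x (4 * r)
        · exact integral_ball_four_mul_le_cube_mul hCd.le hr hx (fun z => (hω z).le)
            (hloc.integrableOn_ball x₀ _) (hdoub x₀)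
    _ = (C_d ^ 2) ^ (1 - p) * (p⁻¹ * C_d ^ (1 - p)) * (C_d ^ 3) ^ p *
          (∫ u in ball x₀ r, ω u) ^ p := by
        rw [Real.mul_rpow (by positivity) (hF_nonneg x₀ r)]
        ring
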